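/- Let c₁ = 2/√3, c₂ = −1/√3 + i, c₃ = −1/√3 − i in ℂ and r = 1/√3, and define g₁(z) = 2/√3 + 1/(3z − 2√3), g₂(z) = −1/√3 + i + e^{−2πi/3}/(3z + √3 − 3i), g₃(z) = −1/√3 − i + e^{2πi/3}/(3z + √3 + 3i). Then the three closed disks B̄(c_j, r) are pairwise disjoint, and for all i ≠ j in {1,2,3}, the map g_j sends the closed disk B̄(c_i, r) into the open disk B(c_j, r). -/

import Mathlib

open Complex Metric

/-- Centers of the three Schottky disks. -/
noncomputable def schottkyCenter : Fin 3 → ℂ :=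
  ![2 / Real.sqrt 3, -1 / Real.sqrt 3 + I, -1 / Real.sqrt 3 - I]

/-- The three Schottky generators. -/
noncomputable def schottkyMap : Fin 3 → ℂ → ℂ :=
  ![fun z => 2 / Real.sqrt 3 + 1 / (3 * z - 2 * Real.sqrt 3),
    fun z => -1 / Real.sqrt 3 + I +
      Complex.exp (-2 * Real.pi * I / 3) / (3 * z + Real.sqrt 3 - 3 * I),
    fun z => -1 / Real.sqrt 3 - I +
      Complex.exp (2 * Real.pi * I / 3) / (3 * z + Real.sqrt 3 + 3 * I)]

/-!
Each `g_j` is `z ↦ c_j + ω_j / (3 (z - c_j))` with `‖ω_j‖ = 1`. The centres are pairwise at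
distance `2 > 2r`, so a point `z` of another disk has `‖z - c_j‖ ≥ 2 - r`, whence
`‖g_j z - c_j‖ ≤ 1 / (3 (2 - r)) < r`; with `r = 1/√3` the last inequality says `1 < √3`.
-/

theorem add_div_sub_mem_ball {𝕜 : Type*} [NormedField 𝕜] {c z w : 𝕜} {ρ r : ℝ} (hρ : 0 < ρ)
    (hz : ρ ≤ ‖z - c‖) (hw : ‖w‖ < r * ρ) : c + w / (z - c) ∈ ball c r := by
  have hr : 0 < r := pos_of_mul_pos_left ((norm_nonneg w).trans_lt hw) hρ.le
  rw [mem_ball, dist_eq_norm, add_sub_cancel_left, norm_div, div_lt_iff₀ (hρ.trans_le hz)]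
  exact hw.trans_le (mul_le_mul_of_nonneg_left hz hr.le)

theorem one_div_sqrt_three_lt_one : 1 / √3 < 1 := by
  rw [div_lt_one (by positivity)]
  exact Real.lt_sqrt_of_sq_lt (by norm_num)

theorem one_third_lt_one_div_sqrt_three_mul : 1 / 3 < 1 / √3 * (2 - 1 / √3) := by
  have h1 : 1 < √3 := Real.lt_sqrt_of_sq_lt (by norm_num)
  field_simp
  rw [Real.sq_sqrt zero_le_three]
  linarith

theorem ofReal_sqrt_three_sq : ((√3 : ℝ) : ℂ) ^ 2 = 3 := by
  norm_cast
  exact Real.sq_sqrt zero_le_three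

noncomputable def schottkyMultiplier : Fin 3 → ℂ :=
  ![1, Complex.exp (-2 * Real.pi * I / 3), Complex.exp (2 * Real.pi * I / 3)]

-- Also true at the pole `z = c_j`, where both sides equal `c_j` since `x / 0 = 0`.
theorem schottkyMap_eq (j : Fin 3) (z : ℂ) :
    schottkyMap j z = schottkyCenter j + schottkyMultiplier j / 3 / (z - schottkyCenter j) := by
  fin_cases j <;>
  · simp only [schottkyMap, schottkyCenter, schottkyMultiplier, Fin.zero_eta, Fin.mk_one,
      Fin.reduceFinMk, Matrix.cons_val_zero, Matrix.cons_val_one, Matrix.cons_val_two,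
      Matrix.head_cons, Matrix.tail_cons, div_div]
    congr 2
    field_simp
    ring_nf
    simp only [ofReal_sqrt_three_sq]
    ring

theorem norm_schottkyMultiplier (j : Fin 3) : ‖schottkyMultiplier j‖ = 1 := by
  fin_cases j <;> simp [schottkyMultiplier, Complex.norm_exp]

theorem dist_schottkyCenter {i j : Fin 3} (hij : i ≠ j) :
    dist (schottkyCenter i) (schottkyCenter j) = 2 := by
  have hsq : √3 ^ 2 = 3 := Real.sq_sqrt zero_le_three
  rw [← sq_eq_sq₀ dist_nonneg zero_le_two, dist_eq, Complex.sq_norm, normSq_apply]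
  fin_cases i <;> fin_cases j <;> first
    | exact absurd rfl hij
    | simp [schottkyCenter]; field_simp; norm_num [hsq]

/-- The three closed disks `B̄(c_j, 1/√3)` are pairwise disjoint, and for `i ≠ j` the map
`g_j` sends `B̄(c_i, 1/√3)` into the open disk `B(c_j, 1/√3)`. -/
theorem schottky_disks_disjoint_and_mapsTo :
    (∀ i j : Fin 3, i ≠ j →
      Disjoint (closedBall (schottkyCenter i) (1 / Real.sqrt 3))
        (closedBall (schottkyCenter j) (1 / Real.sqrt 3))) ∧
    (∀ i j : Fin 3, i ≠ j →
      Set.MapsTo (schottkyMap j) (closedBall (schottkyCenter i) (1 / Real.sqrt 3))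
        (ball (schottkyCenter j) (1 / Real.sqrt 3))) := by
  have hr : 1 / √3 < 1 := one_div_sqrt_three_lt_one
  refine ⟨fun i j hij => closedBall_disjoint_closedBall ?_, fun i j hij z hz => ?_⟩
  · rw [dist_schottkyCenter hij]
    linarith
  · have hz_far : 2 - 1 / √3 ≤ ‖z - schottkyCenter j‖ := by
      rw [← dist_eq, ← dist_schottkyCenter hij]
      linarith [dist_triangle_left (schottkyCenter i) (schottkyCenter j) z, mem_closedBall.1 hz]
    rw [schottkyMap_eq]
    refine add_div_sub_mem_ball (by linarith) hz_far ?_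
    rw [norm_div, norm_schottkyMultiplier, RCLike.norm_ofNat]
    exact one_third_lt_one_div_sqrt_three_mul
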